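/- Let M be a symmetric D×D real matrix whose K-th largest eigenvalue λ_K is strictly positive, and let W̃ be any D×K real matrix. Then ‖M − W̃W̃ᵀ‖_F² ≥ ∑_{k=K+1}^{D} λ_k(M)², with equality attained when W̃ = W_K Λ_K^{1/2}, where the columns of W_K are orthonormal eigenvectors for the top-K eigenvalues and Λ_K = diag(λ_1,…,λ_K). -/

import Mathlib

/-!
Conjugating by `V` reduces the bound to `M = diagonal λ` and `B = Vᵀ W`, where expanding the square
leaves `2 ∑ᵢ λᵢ (B Bᵀ)ᵢᵢ - ‖B Bᵀ‖² ≤ ∑_{i<K} λᵢ²` to prove. Replacing negative `λᵢ` by `0` only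
increases the left side, because `B Bᵀ` has a non-negative diagonal.

Write `B Bᵀ = U diag(μ) Uᵀ` with `U` orthogonal; since `rank (B Bᵀ) ≤ K`, at most `K` of the `μⱼ`
are non-zero. With `aⱼ = ∑ᵢ λᵢ Uᵢⱼ²` the left side is `∑ⱼ (2 μⱼ aⱼ - μⱼ²) ≤ ∑_{μⱼ ≠ 0} aⱼ²`, and
Cauchy–Schwarz on the unit column `U·ⱼ` gives `aⱼ² ≤ ∑ᵢ λᵢ² Uᵢⱼ²`. The left side is therefore at
most `∑ᵢ λᵢ² qᵢ` with weights `qᵢ = ∑_{μⱼ ≠ 0} Uᵢⱼ²` in `[0, 1]` (rows of `U` are unit vectors) of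
total mass at most `K`; as `λᵢ²` decreases in `i`, such a sum is at most `∑_{i<K} λᵢ²`.
-/

open Matrix

/-- Squared Frobenius norm of a real matrix. -/
def frobSq {m n : Type*} [Fintype m] [Fintype n] (M : Matrix m n ℝ) : ℝ :=
  ∑ i, ∑ j, (M i j) ^ 2

open Finset

theorem frobSq_eq_trace {m n : Type*} [Fintype m] [Fintype n] (M : Matrix m n ℝ) :
    frobSq M = (Mᵀ * M).trace := by
  simp only [frobSq, trace, diag_apply, mul_apply, transpose_apply, pow_two]
  exact sum_comm

theorem frobSq_diagonal {n : Type*} [Fintype n] [DecidableEq n] (d : n → ℝ) :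
    frobSq (diagonal d) = ∑ i, d i ^ 2 := by
  simp [frobSq, diagonal_apply, ite_pow]

theorem frobSq_diagonal_sub {n : Type*} [Fintype n] [DecidableEq n] (d : n → ℝ)
    (P : Matrix n n ℝ) :
    frobSq (diagonal d - P) = ∑ i, d i ^ 2 - 2 * ∑ i, d i * P i i + frobSq P := by
  have row : ∀ i, ∑ j, (diagonal d - P) i j ^ 2
      = d i ^ 2 - 2 * (d i * P i i) + ∑ j, P i j ^ 2 := by
    intro i
    have : ∀ j, (diagonal d - P) i j ^ 2
        = (if i = j then d i ^ 2 - 2 * (d i * P i j) else 0) + P i j ^ 2 := by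
      intro j
      by_cases h : i = j
      · subst h
        simp only [Matrix.sub_apply, diagonal_apply_eq, if_true]
        ring
      · simp [h]
    simp only [this, sum_add_distrib, sum_ite_eq, mem_univ, if_true]
  simp only [frobSq, row, sum_add_distrib, sum_sub_distrib, mul_sum]

theorem frobSq_mul_mul_transpose {n : Type*} [Fintype n] [DecidableEq n] (V A : Matrix n n ℝ)
    (hV : Vᵀ * V = 1) :
    frobSq (V * A * Vᵀ) = frobSq A := by
  rw [frobSq_eq_trace, frobSq_eq_trace]
  calc ((V * A * Vᵀ)ᵀ * (V * A * Vᵀ)).trace = (V * (Aᵀ * (Vᵀ * V) * A) * Vᵀ).trace := by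
        simp only [transpose_mul, transpose_transpose, Matrix.mul_assoc]
    _ = (Aᵀ * A).trace := by
        rw [Matrix.mul_assoc, trace_mul_comm, hV, Matrix.mul_one, Matrix.mul_assoc, hV,
          Matrix.mul_one]

theorem sum_ite_lt_eq_sum_castLE {M : Type*} [AddCommMonoid M] {D K : ℕ} (hK : K ≤ D)
    (f : Fin D → M) :
    ∑ i : Fin D, (if (i : ℕ) < K then f i else 0) = ∑ k : Fin K, f (Fin.castLE hK k) := by
  rw [← sum_filter]
  exact sum_bij' (fun i hi => ⟨i, by simpa using hi⟩) (fun k _ => Fin.castLE hK k)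
    (by simp) (by simp) (by simp) (by simp) (by simp)

theorem sum_ite_lt_const {D K : ℕ} (hK : K ≤ D) (θ : ℝ) :
    ∑ i : Fin D, (if (i : ℕ) < K then θ else 0) = K * θ := by
  simp [sum_ite_lt_eq_sum_castLE hK fun _ => θ]

theorem sum_mul_le_sum_ite_lt {D K : ℕ} (hK : K ≤ D) {c q : Fin D → ℝ} (hc : Antitone c)
    (hc0 : ∀ i, 0 ≤ c i) (hq0 : ∀ i, 0 ≤ q i) (hq1 : ∀ i, q i ≤ 1) (hqK : ∑ i, q i ≤ K) :
    ∑ i, c i * q i ≤ ∑ i : Fin D, if (i : ℕ) < K then c i else 0 := by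
  obtain rfl | hKpos := K.eq_zero_or_pos
  · have hq : ∀ i, q i = 0 := fun i =>
      (sum_eq_zero_iff_of_nonneg fun i _ => hq0 i).mp
        (le_antisymm (by simpa using hqK) (sum_nonneg fun i _ => hq0 i)) i (mem_univ i)
    simp [hq]
  -- `c k = c (K - 1)` separates the first `K` values of `c` from the others
  set k : Fin D := ⟨K - 1, by omega⟩
  have hterm : ∀ i : Fin D, c i * q i + (if (i : ℕ) < K then c k else 0)
      ≤ (if (i : ℕ) < K then c i else 0) + c k * q i := by
    intro i
    split_ifs with hi
    · nlinarith [hc (show i ≤ k by simp [k, Fin.le_def]; omega), hq1 i]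
    · nlinarith [hc (show k ≤ i by simp [k, Fin.le_def]; omega), hq0 i]
  have hsum := sum_le_sum fun i (_ : i ∈ univ) => hterm i
  rw [sum_add_distrib, sum_add_distrib, sum_ite_lt_const hK, ← mul_sum] at hsum
  nlinarith [mul_le_mul_of_nonneg_left hqK (hc0 k)]

theorem sq_sum_mul_sq_le {ι : Type*} [Fintype ι] (c u : ι → ℝ) (hu : ∑ i, u i ^ 2 = 1) :
    (∑ i, c i * u i ^ 2) ^ 2 ≤ ∑ i, c i ^ 2 * u i ^ 2 := by
  have h := sum_mul_sq_le_sq_mul_sq univ (fun i => c i * u i) u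
  simp only [hu, mul_one, mul_pow, mul_assoc, ← sq] at h
  exact h

theorem sum_sq_apply_eq_one_of_transpose_mul_self {n : Type*} [Fintype n] [DecidableEq n]
    {U : Matrix n n ℝ} (hU : Uᵀ * U = 1) (j : n) : ∑ i, U i j ^ 2 = 1 := by
  simpa [mul_apply, sq] using congrFun (congrFun hU j) j

theorem mul_diagonal_mul_transpose_apply_self {n : Type*} [Fintype n] [DecidableEq n]
    (U : Matrix n n ℝ) (μ : n → ℝ) (i : n) :
    (U * diagonal μ * Uᵀ) i i = ∑ j, μ j * U i j ^ 2 := by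
  rw [mul_apply]
  exact sum_congr rfl fun j _ => by simp only [mul_diagonal, transpose_apply]; ring

theorem two_mul_sum_mul_diag_sub_le_of_orthogonal {D K : ℕ} (hK : K ≤ D)
    {U : Matrix (Fin D) (Fin D) ℝ} (hU : Uᵀ * U = 1) (hU' : U * Uᵀ = 1) {μ : Fin D → ℝ}
    (hμ : #{j | μ j ≠ 0} ≤ K) {c : Fin D → ℝ} (hc : Antitone c) (hc0 : ∀ i, 0 ≤ c i) :
    2 * ∑ i, c i * (U * diagonal μ * Uᵀ) i i - ∑ j, μ j ^ 2
      ≤ ∑ i : Fin D, if (i : ℕ) < K then c i ^ 2 else 0 := by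
  have hcol := sum_sq_apply_eq_one_of_transpose_mul_self hU
  have hrow : ∀ i, ∑ j, U i j ^ 2 = 1 :=
    sum_sq_apply_eq_one_of_transpose_mul_self (U := Uᵀ) (by rwa [transpose_transpose])
  set q : Fin D → ℝ := fun i => ∑ j, if μ j ≠ 0 then U i j ^ 2 else 0
  have hq0 : ∀ i, 0 ≤ q i := fun i => sum_nonneg fun j _ => by split_ifs <;> positivity
  have hq1 : ∀ i, q i ≤ 1 := fun i => (hrow i).symm ▸
    sum_le_sum fun j _ => by split_ifs <;> [exact le_rfl; positivity]
  have hqK : ∑ i, q i ≤ K :=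
    calc ∑ i, q i = ∑ j, if μ j ≠ 0 then (1 : ℝ) else 0 := by
          rw [sum_comm]
          exact sum_congr rfl fun j _ => by split_ifs <;> simp [hcol j]
      _ ≤ K := by rw [sum_boole]; exact_mod_cast hμ
  calc 2 * ∑ i, c i * (U * diagonal μ * Uᵀ) i i - ∑ j, μ j ^ 2
      = ∑ j, (2 * μ j * ∑ i, c i * U i j ^ 2 - μ j ^ 2) := by
        simp only [mul_diagonal_mul_transpose_apply_self, mul_sum, sum_sub_distrib]
        rw [sum_comm]
        congr 1
        exact sum_congr rfl fun j _ => sum_congr rfl fun i _ => by ring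
    _ ≤ ∑ j, if μ j ≠ 0 then (∑ i, c i * U i j ^ 2) ^ 2 else 0 := by
        refine sum_le_sum fun j _ => ?_
        split_ifs with hj
        · nlinarith [sq_nonneg (μ j - ∑ i, c i * U i j ^ 2)]
        · simp [not_not.mp hj]
    _ ≤ ∑ j, if μ j ≠ 0 then ∑ i, c i ^ 2 * U i j ^ 2 else 0 := by
        refine sum_le_sum fun j _ => ?_
        split_ifs
        exacts [sq_sum_mul_sq_le c (U · j) (hcol j), le_rfl]
    _ = ∑ i, c i ^ 2 * q i := by
        simp only [q, mul_sum, mul_ite, mul_zero]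
        rw [sum_comm]
        exact sum_congr rfl fun j _ => by split_ifs <;> simp
    _ ≤ ∑ i : Fin D, if (i : ℕ) < K then c i ^ 2 else 0 :=
        sum_mul_le_sum_ite_lt hK (fun i j hij => pow_le_pow_left₀ (hc0 j) (hc hij) 2)
          (fun i => sq_nonneg _) hq0 hq1 hqK

theorem Matrix.IsHermitian.transpose_mul_eigenvectorUnitary {n : Type*} [Fintype n]
    [DecidableEq n] {P : Matrix n n ℝ} (hP : P.IsHermitian) :
    (hP.eigenvectorUnitary : Matrix n n ℝ)ᵀ * hP.eigenvectorUnitary = 1 := by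
  rw [← conjTranspose_eq_transpose_of_trivial, ← star_eq_conjTranspose, Unitary.coe_star_mul_self]

theorem Matrix.IsHermitian.eigenvectorUnitary_mul_transpose {n : Type*} [Fintype n]
    [DecidableEq n] {P : Matrix n n ℝ} (hP : P.IsHermitian) :
    (hP.eigenvectorUnitary : Matrix n n ℝ) * (hP.eigenvectorUnitary : Matrix n n ℝ)ᵀ = 1 := by
  rw [← conjTranspose_eq_transpose_of_trivial, ← star_eq_conjTranspose,
    Unitary.mul_star_self_of_mem hP.eigenvectorUnitary.2]

theorem Matrix.IsHermitian.eq_eigenvectorUnitary_mul_diagonal {n : Type*} [Fintype n]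
    [DecidableEq n] {P : Matrix n n ℝ} (hP : P.IsHermitian) :
    P = hP.eigenvectorUnitary * diagonal hP.eigenvalues
      * (hP.eigenvectorUnitary : Matrix n n ℝ)ᵀ := by
  simpa [Unitary.conjStarAlgAut_apply, star_eq_conjTranspose] using hP.spectral_theorem

theorem Matrix.IsHermitian.two_mul_sum_mul_diag_sub_frobSq_le {D K : ℕ} (hK : K ≤ D)
    {P : Matrix (Fin D) (Fin D) ℝ} (hP : P.IsHermitian) (hrank : P.rank ≤ K)
    {c : Fin D → ℝ} (hc : Antitone c) (hc0 : ∀ i, 0 ≤ c i) :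
    2 * ∑ i, c i * P i i - frobSq P ≤ ∑ i : Fin D, if (i : ℕ) < K then c i ^ 2 else 0 := by
  have hU := hP.transpose_mul_eigenvectorUnitary
  have hcard : #{j | hP.eigenvalues j ≠ 0} ≤ K := by
    rwa [hP.rank_eq_card_non_zero_eigs, Fintype.card_subtype] at hrank
  rw [hP.eq_eigenvectorUnitary_mul_diagonal, frobSq_mul_mul_transpose _ _ hU,
    frobSq_diagonal]
  exact two_mul_sum_mul_diag_sub_le_of_orthogonal hK hU
    hP.eigenvectorUnitary_mul_transpose hcard hc hc0

theorem sum_sq_of_le_le_frobSq_diagonal_sub_mul_transpose {D K : ℕ} (hK : K ≤ D)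
    {d : Fin D → ℝ} (hd : Antitone d) (hd0 : ∀ i : Fin D, (i : ℕ) < K → 0 ≤ d i)
    (B : Matrix (Fin D) (Fin K) ℝ) :
    ∑ i : Fin D, (if K ≤ (i : ℕ) then d i ^ 2 else 0) ≤ frobSq (diagonal d - B * Bᵀ) := by
  have hP : (B * Bᵀ).IsHermitian := by
    simpa [conjTranspose_eq_transpose_of_trivial] using isHermitian_mul_conjTranspose_self B
  have hrank : (B * Bᵀ).rank ≤ K := (rank_mul_le_left B Bᵀ).trans B.rank_le_width
  have hdiag : ∀ i, 0 ≤ (B * Bᵀ) i i := fun i => by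
    simpa [mul_apply, sq] using sum_nonneg fun j (_ : j ∈ univ) => sq_nonneg (B i j)
  set e : Fin D → ℝ := fun i => max (d i) 0
  have hcross : ∑ i, d i * (B * Bᵀ) i i ≤ ∑ i, e i * (B * Bᵀ) i i :=
    sum_le_sum fun i _ => mul_le_mul_of_nonneg_right (le_max_left _ _) (hdiag i)
  have hhead := hP.two_mul_sum_mul_diag_sub_frobSq_le hK hrank (c := e)
    (fun i j hij => max_le_max (hd hij) le_rfl) (fun i => le_max_right _ _)
  have hsplit : ∑ i, d i ^ 2 = (∑ i : Fin D, if (i : ℕ) < K then e i ^ 2 else 0)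
      + ∑ i : Fin D, if K ≤ (i : ℕ) then d i ^ 2 else 0 := by
    rw [← sum_add_distrib]
    refine sum_congr rfl fun i _ => ?_
    by_cases hi : (i : ℕ) < K
    · simp [e, hi, max_eq_left (hd0 i hi), not_le.mpr hi]
    · simp [hi, not_lt.mp hi]
  rw [frobSq_diagonal_sub]
  linarith

theorem submatrix_castLE_mul_diagonal_sqrt_mul_transpose {D K : ℕ} (hK : K ≤ D)
    (V : Matrix (Fin D) (Fin D) ℝ) {g : Fin D → ℝ} (hg : ∀ i : Fin D, (i : ℕ) < K → 0 ≤ g i) :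
    (V.submatrix id (Fin.castLE hK) * diagonal fun k => √(g (Fin.castLE hK k))) *
        (V.submatrix id (Fin.castLE hK) * diagonal fun k => √(g (Fin.castLE hK k)))ᵀ
      = V * diagonal (fun i : Fin D => if (i : ℕ) < K then g i else 0) * Vᵀ := by
  ext a b
  have hsqrt : ∀ k : Fin K,
      √(g (Fin.castLE hK k)) * √(g (Fin.castLE hK k)) = g (Fin.castLE hK k) :=
    fun k => Real.mul_self_sqrt (hg _ (by simp))
  calc _ = ∑ k : Fin K,
        V a (Fin.castLE hK k) * g (Fin.castLE hK k) * V b (Fin.castLE hK k) := by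
        rw [mul_apply]
        refine sum_congr rfl fun k _ => ?_
        simp only [mul_diagonal, transpose_apply, submatrix_apply, id]
        linear_combination V a (Fin.castLE hK k) * V b (Fin.castLE hK k) * hsqrt k
    _ = ∑ i : Fin D, if (i : ℕ) < K then V a i * g i * V b i else 0 :=
        (sum_ite_lt_eq_sum_castLE hK fun i => V a i * g i * V b i).symm
    _ = _ := by
        rw [mul_apply]
        refine sum_congr rfl fun i _ => ?_
        simp only [mul_diagonal, transpose_apply]
        split_ifs <;> simp

theorem stmt_2_general {D K : ℕ} (hK : K ≤ D) (M : Matrix (Fin D) (Fin D) ℝ)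
    (V : Matrix (Fin D) (Fin D) ℝ) (hV : Vᵀ * V = 1)
    (eig : Fin D → ℝ) (heig : Antitone eig)
    (hdecomp : M = V * Matrix.diagonal eig * Vᵀ)
    (hpos : ∀ k : Fin D, (k : ℕ) < K → 0 < eig k) :
    (∀ W : Matrix (Fin D) (Fin K) ℝ,
      (∑ k : Fin D, if K ≤ (k : ℕ) then (eig k) ^ 2 else 0) ≤ frobSq (M - W * Wᵀ)) ∧
    frobSq (M -
        (V.submatrix id (Fin.castLE hK) *
          Matrix.diagonal fun k : Fin K => Real.sqrt (eig (Fin.castLE hK k))) *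
        (V.submatrix id (Fin.castLE hK) *
          Matrix.diagonal fun k : Fin K => Real.sqrt (eig (Fin.castLE hK k)))ᵀ) =
      (∑ k : Fin D, if K ≤ (k : ℕ) then (eig k) ^ 2 else 0) := by
  have heig0 : ∀ i : Fin D, (i : ℕ) < K → 0 ≤ eig i := fun i hi => (hpos i hi).le
  refine ⟨fun W => ?_, ?_⟩
  · have hVV : V * Vᵀ = 1 := mul_eq_one_comm.mp hV
    have hconj : M - W * Wᵀ = V * (diagonal eig - (Vᵀ * W) * (Vᵀ * W)ᵀ) * Vᵀ := by
      simp only [hdecomp, Matrix.mul_sub, Matrix.sub_mul, transpose_mul, transpose_transpose,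
        ← Matrix.mul_assoc, hVV, Matrix.one_mul]
      simp only [Matrix.mul_assoc, hVV, Matrix.mul_one]
    rw [hconj, frobSq_mul_mul_transpose _ _ hV]
    exact sum_sq_of_le_le_frobSq_diagonal_sub_mul_transpose hK heig heig0 _
  · rw [submatrix_castLE_mul_diagonal_sqrt_mul_transpose hK V heig0, hdecomp, ← Matrix.sub_mul,
      ← Matrix.mul_sub, diagonal_sub, frobSq_mul_mul_transpose _ _ hV, frobSq_diagonal]
    refine sum_congr rfl fun i _ => ?_
    by_cases hi : K ≤ (i : ℕ)
    · simp [hi, not_lt.mpr hi]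
    · simp [hi, not_le.mp hi]

theorem stmt_2 {D K : ℕ} (hK : K ≤ D) (M : Matrix (Fin D) (Fin D) ℝ) (hM : M.IsSymm)
    (V : Matrix (Fin D) (Fin D) ℝ) (hV : Vᵀ * V = 1)
    (eig : Fin D → ℝ) (heig : Antitone eig)
    (hdecomp : M = V * Matrix.diagonal eig * Vᵀ)
    (hpos : ∀ k : Fin D, (k : ℕ) < K → 0 < eig k) :
    (∀ W : Matrix (Fin D) (Fin K) ℝ,
      (∑ k : Fin D, if K ≤ (k : ℕ) then (eig k) ^ 2 else 0) ≤ frobSq (M - W * Wᵀ)) ∧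
    frobSq (M -
        (V.submatrix id (Fin.castLE hK) *
          Matrix.diagonal fun k : Fin K => Real.sqrt (eig (Fin.castLE hK k))) *
        (V.submatrix id (Fin.castLE hK) *
          Matrix.diagonal fun k : Fin K => Real.sqrt (eig (Fin.castLE hK k)))ᵀ) =
      (∑ k : Fin D, if K ≤ (k : ℕ) then (eig k) ^ 2 else 0) :=
  stmt_2_general hK M V hV eig heig hdecomp hpos
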